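/- Let P₁ and P₂ be positive semidefinite complex n×n matrices and Σ Hermitian positive definite. Then the spectral radius of the PPS iteration matrix Γ = (Σ + P₁)^{-1}(Σ - P₂)(Σ + P₂)^{-1}(Σ - P₁) satisfies ρ(Γ) ≤ 1. -/

import Mathlib

open Matrix ComplexOrder

noncomputable def specNorm {n : ℕ} (M : Matrix (Fin n) (Fin n) ℂ) : ℝ :=
  ‖Matrix.toEuclideanCLM (𝕜 := ℂ) M‖

noncomputable def evnorm {n : ℕ} (x : Fin n → ℂ) : ℝ :=
  ‖(WithLp.equiv 2 (Fin n → ℂ)).symm x‖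

/-- `P` is positive semidefinite in the (possibly non-Hermitian) sense:
`Re (x* P x) ≥ 0` for all `x`. -/
def IsPSD {n : ℕ} (P : Matrix (Fin n) (Fin n) ℂ) : Prop :=
  ∀ x : Fin n → ℂ, 0 ≤ (star x ⬝ᵥ P *ᵥ x).re

/-- `P` is positive definite in the (possibly non-Hermitian) sense:
`Re (x* P x) > 0` for all nonzero `x`. -/
def IsPD {n : ℕ} (P : Matrix (Fin n) (Fin n) ℂ) : Prop :=
  ∀ x : Fin n → ℂ, x ≠ 0 → 0 < (star x ⬝ᵥ P *ᵥ x).re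

/-- `Σ^{-1/2} P Σ^{-1/2}` where `Σ^{1/2}` is the HPD square root of the HPD matrix `Sg`. -/
noncomputable def tild {n : ℕ} (Sg P : Matrix (Fin n) (Fin n) ℂ) (hS : Sg.PosDef) :
    Matrix (Fin n) (Fin n) ℂ :=
  ((hS.1.eigenvectorUnitary : Matrix (Fin n) (Fin n) ℂ) *
      diagonal (((↑) : ℝ → ℂ) ∘ Real.sqrt ∘ hS.1.eigenvalues) *
      (star (hS.1.eigenvectorUnitary : Matrix (Fin n) (Fin n) ℂ)))⁻¹ * P *
    ((hS.1.eigenvectorUnitary : Matrix (Fin n) (Fin n) ℂ) *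
      diagonal (((↑) : ℝ → ℂ) ∘ Real.sqrt ∘ hS.1.eigenvalues) *
      (star (hS.1.eigenvectorUnitary : Matrix (Fin n) (Fin n) ℂ)))⁻¹

open scoped InnerProductSpace

lemma aux_inner_eq_dot {n : ℕ} (x y : Fin n → ℂ) :
    ⟪(WithLp.equiv 2 (Fin n → ℂ)).symm x, (WithLp.equiv 2 (Fin n → ℂ)).symm y⟫_ℂ
      = star x ⬝ᵥ y := by
  simp [PiLp.inner_apply, dotProduct, RCLike.inner_apply, mul_comm]

lemma aux_dot_self_re_pos {n : ℕ} (v : Fin n → ℂ) (hv : v ≠ 0) :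
    0 < (star v ⬝ᵥ v).re := by
  have h : (star v ⬝ᵥ v).re = ∑ i, Complex.normSq (v i) := by
    simp [dotProduct, Complex.re_sum, Complex.normSq, Complex.mul_re]
  rw [h]
  obtain ⟨i, hi⟩ := Function.ne_iff.mp hv
  exact Finset.sum_pos' (fun j _ => Complex.normSq_nonneg _)
    ⟨i, Finset.mem_univ i, by simpa using Complex.normSq_pos.mpr hi⟩

lemma aux_one_add_isUnit {n : ℕ} (Q : Matrix (Fin n) (Fin n) ℂ) (hQ : IsPSD Q) :
    IsUnit (1 + Q) := by
  refine Matrix.mulVec_injective_iff_isUnit.mp fun v w hvw => ?_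
  have hsub : (1 + Q) *ᵥ (v - w) = 0 := by
    rw [Matrix.mulVec_sub, hvw, sub_self]
  by_contra hne
  have hv0 : v - w ≠ 0 := sub_ne_zero.mpr hne
  have h0 : (star (v - w) ⬝ᵥ (1 + Q) *ᵥ (v - w)).re = 0 := by rw [hsub]; simp
  rw [Matrix.add_mulVec, Matrix.one_mulVec, dotProduct_add, Complex.add_re] at h0
  have := hQ (v - w)
  have := aux_dot_self_re_pos (v - w) hv0
  linarith

lemma aux_cayley_mulVec_le {n : ℕ} (Q : Matrix (Fin n) (Fin n) ℂ) (hQ : IsPSD Q)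
    (x : Fin n → ℂ) :
    ‖(WithLp.equiv 2 (Fin n → ℂ)).symm ((1 - Q) *ᵥ x)‖
      ≤ ‖(WithLp.equiv 2 (Fin n → ℂ)).symm ((1 + Q) *ᵥ x)‖ := by
  set e : (Fin n → ℂ) → WithLp 2 (Fin n → ℂ) := fun z => (WithLp.equiv 2 (Fin n → ℂ)).symm z with he
  have h1 : (1 - Q) *ᵥ x = x - Q *ᵥ x := by rw [Matrix.sub_mulVec, Matrix.one_mulVec]
  have h2 : (1 + Q) *ᵥ x = x + Q *ᵥ x := by rw [Matrix.add_mulVec, Matrix.one_mulVec]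
  have hes : e (x - Q *ᵥ x) = e x - e (Q *ᵥ x) := rfl
  have hea : e (x + Q *ᵥ x) = e x + e (Q *ᵥ x) := rfl
  have hre : 0 ≤ Complex.re ⟪e x, e (Q *ᵥ x)⟫_ℂ := by
    rw [he, aux_inner_eq_dot]; exact hQ x
  have hsub := @norm_sub_sq ℂ _ _ _ _ (e x) (e (Q *ᵥ x))
  have hadd := @norm_add_sq ℂ _ _ _ _ (e x) (e (Q *ᵥ x))
  rw [h1, h2]
  show ‖e (x - Q *ᵥ x)‖ ≤ ‖e (x + Q *ᵥ x)‖
  rw [hes, hea]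
  have hre' : 0 ≤ RCLike.re ⟪e x, e (Q *ᵥ x)⟫_ℂ := by
    rw [RCLike.re_to_complex]; exact hre
  nlinarith [norm_nonneg (e x - e (Q *ᵥ x)), norm_nonneg (e x + e (Q *ᵥ x))]

lemma aux_cayley_norm_le {n : ℕ} (Q : Matrix (Fin n) (Fin n) ℂ) (hQ : IsPSD Q) :
    specNorm ((1 - Q) * (1 + Q)⁻¹) ≤ 1 := by
  unfold specNorm
  refine ContinuousLinearMap.opNorm_le_bound _ zero_le_one fun y => ?_
  obtain ⟨v, rfl⟩ : ∃ v, (WithLp.equiv 2 (Fin n → ℂ)).symm v = y :=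
    ⟨WithLp.equiv 2 _ y, rfl⟩
  rw [WithLp.equiv_symm_apply, Matrix.toEuclideanCLM_toLp, ← WithLp.equiv_symm_apply, one_mul]
  have hu : IsUnit (1 + Q).det := (Matrix.isUnit_iff_isUnit_det _).mp (aux_one_add_isUnit Q hQ)
  have hmv : ((1 - Q) * (1 + Q)⁻¹) *ᵥ v = (1 - Q) *ᵥ ((1 + Q)⁻¹ *ᵥ v) :=
    (Matrix.mulVec_mulVec v (1 - Q) (1 + Q)⁻¹).symm
  have hrec : (1 + Q) *ᵥ ((1 + Q)⁻¹ *ᵥ v) = v := by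
    rw [Matrix.mulVec_mulVec, Matrix.mul_nonsing_inv _ hu, Matrix.one_mulVec]
  calc ‖(WithLp.equiv 2 (Fin n → ℂ)).symm (((1 - Q) * (1 + Q)⁻¹) *ᵥ v)‖
      = ‖(WithLp.equiv 2 (Fin n → ℂ)).symm ((1 - Q) *ᵥ ((1 + Q)⁻¹ *ᵥ v))‖ := by rw [hmv]
    _ ≤ ‖(WithLp.equiv 2 (Fin n → ℂ)).symm ((1 + Q) *ᵥ ((1 + Q)⁻¹ *ᵥ v))‖ :=
        aux_cayley_mulVec_le Q hQ _
    _ = ‖(WithLp.equiv 2 (Fin n → ℂ)).symm v‖ := by rw [hrec]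

lemma aux_isPSD_conj {n : ℕ} (P S : Matrix (Fin n) (Fin n) ℂ) (hP : IsPSD P)
    (hSh : S.IsHermitian) : IsPSD (S * P * S) := by
  intro x
  have key : star x ⬝ᵥ (S * P * S) *ᵥ x = star (S *ᵥ x) ⬝ᵥ P *ᵥ (S *ᵥ x) := by
    rw [Matrix.star_mulVec, ← Matrix.mulVec_mulVec, ← Matrix.mulVec_mulVec,
      Matrix.dotProduct_mulVec (star x) S, hSh.eq]
  rw [key]
  exact hP _

theorem stmt9 {n : ℕ} (P1 P2 Sg : Matrix (Fin n) (Fin n) ℂ)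
    (h1 : IsPSD P1) (h2 : IsPSD P2) (hS : Sg.PosDef) :
    spectralRadius ℂ ((Sg + P1)⁻¹ * (Sg - P2) * (Sg + P2)⁻¹ * (Sg - P1)) ≤ 1 := by
  rcases Nat.eq_zero_or_pos n with rfl | hn
  · haveI : Subsingleton (Matrix (Fin 0) (Fin 0) ℂ) :=
      ⟨fun a b => by ext i; exact absurd i.2 (Nat.not_lt_zero _)⟩
    have hempty : spectrum ℂ ((Sg + P1)⁻¹ * (Sg - P2) * (Sg + P2)⁻¹ * (Sg - P1)) = ∅ := by
      ext k
      simp [spectrum.mem_iff, isUnit_of_subsingleton]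
    rw [spectralRadius.eq_1, hempty]
    simp
  haveI : Nontrivial (EuclideanSpace ℂ (Fin n)) := by
    refine ⟨0, (WithLp.equiv 2 (Fin n → ℂ)).symm (fun _ => 1), fun h => ?_⟩
    have := congrFun (congrArg (WithLp.equiv 2 (Fin n → ℂ)) h) ⟨0, hn⟩
    simp at this
  obtain ⟨S, hSh, hSS, hdet⟩ :
      ∃ S : Matrix (Fin n) (Fin n) ℂ, S.IsHermitian ∧ S * S = Sg ∧ IsUnit S.det := by
    open scoped MatrixOrder in
    refine ⟨CFC.sqrt Sg, (Matrix.nonneg_iff_posSemidef.mp (CFC.sqrt_nonneg Sg)).1,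
      CFC.sqrt_mul_sqrt_self Sg (Matrix.nonneg_iff_posSemidef.mpr hS.posSemidef), ?_⟩
    open scoped MatrixOrder in
    have hd : (CFC.sqrt Sg).det * (CFC.sqrt Sg).det = Sg.det := by
      rw [← Matrix.det_mul, CFC.sqrt_mul_sqrt_self Sg (Matrix.nonneg_iff_posSemidef.mpr hS.posSemidef)]
    have hSgdet : IsUnit Sg.det := (Matrix.isUnit_iff_isUnit_det _).mp hS.isUnit
    exact isUnit_of_mul_isUnit_left (hd ▸ hSgdet)
  have hShinv : (S⁻¹).IsHermitian := hSh.inv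
  set Q1 := S⁻¹ * P1 * S⁻¹ with hQ1def
  set Q2 := S⁻¹ * P2 * S⁻¹ with hQ2def
  have hQ1 : IsPSD Q1 := aux_isPSD_conj P1 S⁻¹ h1 hShinv
  have hQ2 : IsPSD Q2 := aux_isPSD_conj P2 S⁻¹ h2 hShinv
  have hu1 : IsUnit (1 + Q1) := aux_one_add_isUnit Q1 hQ1
  have hu2 : IsUnit (1 + Q2) := aux_one_add_isUnit Q2 hQ2
  have hu1d : IsUnit (1 + Q1).det := (Matrix.isUnit_iff_isUnit_det _).mp hu1
  have hu2d : IsUnit (1 + Q2).det := (Matrix.isUnit_iff_isUnit_det _).mp hu2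
  have hconj : ∀ P : Matrix (Fin n) (Fin n) ℂ, S * (S⁻¹ * P * S⁻¹) * S = P := by
    intro P
    simp only [mul_assoc]
    rw [Matrix.nonsing_inv_mul _ hdet, mul_one, Matrix.mul_nonsing_inv_cancel_left _ _ hdet]
  have hplus1 : Sg + P1 = S * (1 + Q1) * S := by
    rw [mul_add, add_mul, mul_one, hSS, hQ1def, hconj]
  have hplus2 : Sg + P2 = S * (1 + Q2) * S := by
    rw [mul_add, add_mul, mul_one, hSS, hQ2def, hconj]
  have hminus1 : Sg - P1 = S * (1 - Q1) * S := by
    rw [mul_sub, sub_mul, mul_one, hSS, hQ1def, hconj]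
  have hminus2 : Sg - P2 = S * (1 - Q2) * S := by
    rw [mul_sub, sub_mul, mul_one, hSS, hQ2def, hconj]
  clear_value Q1 Q2
  clear hQ1def hQ2def
  set C1 := (1 - Q1) * (1 + Q1)⁻¹ with hC1def
  set C2 := (1 - Q2) * (1 + Q2)⁻¹ with hC2def
  have hU : IsUnit ((1 + Q1) * S) := hu1.mul ((Matrix.isUnit_iff_isUnit_det _).mpr hdet)
  have hsim : (Sg + P1)⁻¹ * (Sg - P2) * (Sg + P2)⁻¹ * (Sg - P1)
      = ((1 + Q1) * S)⁻¹ * (C2 * C1) * ((1 + Q1) * S) := by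
    rw [hplus1, hplus2, hminus1, hminus2, hC1def, hC2def]
    rw [Matrix.mul_inv_rev (S * (1 + Q1)) S, Matrix.mul_inv_rev S (1 + Q1),
      Matrix.mul_inv_rev (S * (1 + Q2)) S, Matrix.mul_inv_rev S (1 + Q2),
      Matrix.mul_inv_rev (1 + Q1) S]
    simp only [mul_assoc, Matrix.nonsing_inv_mul_cancel_left _ _ hdet,
      Matrix.mul_nonsing_inv_cancel_left _ _ hdet,
      Matrix.nonsing_inv_mul_cancel_left _ _ hu1d]
  rw [hsim]
  have hUc : (↑(hU.unit⁻¹) : Matrix (Fin n) (Fin n) ℂ) = ((1 + Q1) * S)⁻¹ := by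
    rw [Matrix.coe_units_inv, hU.unit_spec]
  have hrw : ((1 + Q1) * S)⁻¹ * (C2 * C1) * ((1 + Q1) * S)
      = (↑(hU.unit⁻¹) : Matrix (Fin n) (Fin n) ℂ) * (C2 * C1) *
        (↑hU.unit : Matrix (Fin n) (Fin n) ℂ) := by rw [hUc, hU.unit_spec]
  have hspec : spectrum ℂ (((1 + Q1) * S)⁻¹ * (C2 * C1) * ((1 + Q1) * S))
      = spectrum ℂ (C2 * C1) := by
    rw [hrw]; exact spectrum.units_conjugate'
  have hradius : spectralRadius ℂ (((1 + Q1) * S)⁻¹ * (C2 * C1) * ((1 + Q1) * S))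
      = spectralRadius ℂ (Matrix.toEuclideanCLM (𝕜 := ℂ) (C2 * C1)) := by
    unfold spectralRadius
    rw [hspec, AlgEquiv.spectrum_eq]
  rw [hradius]
  refine le_trans (spectrum.spectralRadius_le_nnnorm _) ?_
  have hnorm : ‖Matrix.toEuclideanCLM (𝕜 := ℂ) (C2 * C1)‖ ≤ 1 := by
    rw [_root_.map_mul]
    calc ‖Matrix.toEuclideanCLM (𝕜 := ℂ) C2 * Matrix.toEuclideanCLM (𝕜 := ℂ) C1‖
        ≤ ‖Matrix.toEuclideanCLM (𝕜 := ℂ) C2‖ * ‖Matrix.toEuclideanCLM (𝕜 := ℂ) C1‖ :=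
          norm_mul_le _ _
      _ ≤ 1 * 1 :=
          mul_le_mul (aux_cayley_norm_le Q2 hQ2) (aux_cayley_norm_le Q1 hQ1)
            (norm_nonneg _) zero_le_one
      _ = 1 := one_mul 1
  have hnn : ‖Matrix.toEuclideanCLM (𝕜 := ℂ) (C2 * C1)‖₊ ≤ 1 := by
    rwa [← NNReal.coe_le_coe, coe_nnnorm, NNReal.coe_one]
  exact_mod_cast hnn
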